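/- Let $A$ and $B$ be vector spaces over a field $F$ and let $V \subseteq \mathrm{Hom}_F(A,B)$ be a pointwise finite dimensional subspace. Then its closure $\overline{V}$ in the finite topology on $\mathrm{Hom}_F(A,B)$ is also pointwise finite dimensional; in fact $\overline{V}a = Va$ for every $a \in A$. -/

import Mathlib

variable {F A B : Type*} [Field F] [AddCommGroup A] [Module F A] [AddCommGroup B] [Module F B]

/-- The finite topology on `Hom_F(A,B)`: pointwise convergence with `B` discrete. -/
def finiteTopology (F A B : Type*) [Field F] [AddCommGroup A] [Module F A]
    [AddCommGroup B] [Module F B] : TopologicalSpace (A →ₗ[F] B) :=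
  TopologicalSpace.induced (fun f : A →ₗ[F] B => (f : A → B))
    (@Pi.topologicalSpace A (fun _ => B) (fun _ => ⊥))

/-! Evaluation at `a` is continuous for the finite topology into `B` with the discrete topology,
hence locally constant, so every value it takes on `closure V` is already taken on `V`. Thus
`V̄a = Va`, which is finite dimensional by hypothesis. -/

theorem Continuous.image_closure_of_discreteTopology {X Y : Type*} [TopologicalSpace X]
    [TopologicalSpace Y] [DiscreteTopology Y] {φ : X → Y} (hφ : Continuous φ) (s : Set X) :
    φ '' closure s = φ '' s :=
  (image_closure_subset_closure_image hφ).trans (closure_discrete _).subset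
    |>.antisymm (Set.image_mono subset_closure)

theorem continuous_apply_finiteTopology (a : A) :
    @Continuous _ _ (finiteTopology F A B) ⊥ (fun f : A →ₗ[F] B => f a) :=
  @Continuous.comp _ _ _ (finiteTopology F A B) (@Pi.topologicalSpace A (fun _ => B) (fun _ => ⊥)) ⊥
    _ _ (@continuous_apply A (fun _ => B) (fun _ => ⊥) a) continuous_induced_dom

theorem image_apply_closure_finiteTopology (S : Set (A →ₗ[F] B)) (a : A) :
    (fun f : A →ₗ[F] B => f a) '' (@closure _ (finiteTopology F A B) S)
      = (fun f : A →ₗ[F] B => f a) '' S :=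
  @Continuous.image_closure_of_discreteTopology _ _ (finiteTopology F A B) ⊥
    (discreteTopology_bot B) _ (continuous_apply_finiteTopology a) S

/-- If `V ⊆ Hom_F(A,B)` is pointwise finite dimensional, then its closure `V̄` in the finite
topology satisfies `V̄a = Va` for every `a ∈ A`; in particular `V̄` is also pointwise finite
dimensional. -/
theorem closure_pointwiseFD (V : Submodule F (A →ₗ[F] B))
    (hV : ∀ a : A,
      FiniteDimensional F (V.map ((LinearMap.applyₗ : A →ₗ[F] (A →ₗ[F] B) →ₗ[F] B) a))) :
    (∀ a : A, (fun f : A →ₗ[F] B => f a) '' (@closure _ (finiteTopology F A B) (V : Set _))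
        = (fun f : A →ₗ[F] B => f a) '' (V : Set _)) ∧
    (∀ a : A, FiniteDimensional F (Submodule.span F
        ((fun f : A →ₗ[F] B => f a) '' (@closure _ (finiteTopology F A B) (V : Set _))))) := by
  refine ⟨image_apply_closure_finiteTopology _, fun a => ?_⟩
  have hVa : (fun f : A →ₗ[F] B => f a) '' (V : Set _)
      = (V.map ((LinearMap.applyₗ : A →ₗ[F] (A →ₗ[F] B) →ₗ[F] B) a) : Set B) :=
    (Submodule.map_coe (LinearMap.applyₗ a) V).symm
  rw [image_apply_closure_finiteTopology, hVa, Submodule.span_eq]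
  exact hV a
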